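/- arXiv:1810.02048 — 3 statements merged into one kernel-verified Lean document; each statement's English description precedes it below -/
import Mathlib

section
/- Let l1, l2 ≥ 4 and k be positive even integers with k < l1 + l2. Let g1 and g2 be holomorphic modular forms of level SL₂(ℤ) and weights l1 and l2 respectively, let t1, t2 be nonnegative integers, set w = l1 + 2t1 + l2 + 2t2 and d = (w − k)/2 (so that d is a positive integer with d > t1 + t2). Then every cusp form f of weight k for SL₂(ℤ) is orthogonal under the Petersson pairing to the weight-k function obtained from the product R_{l1}^{(t1)} g1 · R_{l2}^{(t2)} g2 by applying the lowering operator d times; that is, ∫_𝒟 f(τ) · conj( L^d (R_{l1}^{(t1)} g1 · R_{l2}^{(t2)} g2)(τ) ) · (Im τ)^{k−2} dx dy = 0, where 𝒟 is the standard fundamental domain for SL₂(ℤ) acting on ℍ. -/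
/-- Wirtinger derivative `∂f/∂τ = (1/2)(∂f/∂x − i·∂f/∂y)`. -/
noncomputable def dtau (f : ℂ → ℂ) (z : ℂ) : ℂ :=
  (1/2 : ℂ) * (fderiv ℝ f z 1 - Complex.I * fderiv ℝ f z Complex.I)

/-- Wirtinger derivative `∂f/∂τ̄ = (1/2)(∂f/∂x + i·∂f/∂y)`. -/
noncomputable def dtaubar (f : ℂ → ℂ) (z : ℂ) : ℂ :=
  (1/2 : ℂ) * (fderiv ℝ f z 1 + Complex.I * fderiv ℝ f z Complex.I)

/-- Maass raising operator of weight `k`: `R_k f = 2i·∂f/∂τ + k·f/Im τ`. -/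
noncomputable def raise (k : ℤ) (f : ℂ → ℂ) : ℂ → ℂ :=
  fun z => 2 * Complex.I * dtau f z + (k : ℂ) * f z / (z.im : ℂ)

/-- Maass lowering operator: `L f = −2i·(Im τ)²·∂f/∂τ̄`. -/
noncomputable def lower (f : ℂ → ℂ) : ℂ → ℂ :=
  fun z => -2 * Complex.I * (z.im : ℂ) ^ 2 * dtaubar f z

/-- Iterated raising operator `R_k^(t) = R_{k+2(t−1)} ∘ ⋯ ∘ R_{k+2} ∘ R_k`. -/
noncomputable def raiseIter (k : ℤ) : ℕ → (ℂ → ℂ) → (ℂ → ℂ)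
  | 0 => fun f => f
  | t + 1 => fun f => raise (k + 2 * t) (raiseIter k t f)

/-- The weight-`k` slash action of a real 2×2 matrix of positive determinant:
`(f ∣[k] γ)(τ) = (det γ)^(k/2) · (cτ+d)^(−k) · f((aτ+b)/(cτ+d))`. -/
noncomputable def slash (k : ℤ) (γ : Matrix (Fin 2) (Fin 2) ℝ) (f : ℂ → ℂ) : ℂ → ℂ :=
  fun z => ((γ.det ^ ((k : ℝ) / 2) : ℝ) : ℂ) * ((γ 1 0 : ℂ) * z + (γ 1 1 : ℂ)) ^ (-k) *
    f (((γ 0 0 : ℂ) * z + (γ 0 1 : ℂ)) / ((γ 1 0 : ℂ) * z + (γ 1 1 : ℂ)))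


/-- The standard fundamental domain for the action of `SL₂(ℤ)` on ℍ. -/
def fundamentalDomain : Set ℂ :=
  {z : ℂ | 0 < z.im ∧ 1 ≤ ‖z‖ ∧ |z.re| ≤ 1/2}

/-!
Call `f` nearly holomorphic of depth `< p` if on the upper half-plane
`f = ∑_{r<p} c_r(τ) (Im τ)^{-r}` with holomorphic `c_r`. Since `∂(Im τ)/∂τ̄ = i/2`, the lowering
operator lowers the depth by one, while the raising operator raises it by one and products add
depths. So `R^{(t₁)} g₁ · R^{(t₂)} g₂` has depth `≤ t₁ + t₂ < d`, and `L^d` of it vanishes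
identically on the upper half-plane: the integrand is zero.
-/

open Complex Finset
open UpperHalfPlane (upperHalfPlaneSet isOpen_upperHalfPlaneSet)

lemma hasFDerivAt_inv_im_pow {z : ℂ} (hz : z.im ≠ 0) (r : ℕ) :
    HasFDerivAt (fun w : ℂ => (w.im : ℂ)⁻¹ ^ r)
      (-(r * (z.im : ℂ)⁻¹ ^ (r + 1)) • ofRealCLM.comp imCLM) z := by
  have hzpow := hasDerivAt_zpow (-(r : ℤ)) (z.im : ℂ) (Or.inl (ofReal_ne_zero.mpr hz))
  have h := hzpow.comp_hasFDerivAt z (ofRealCLM.comp imCLM).hasFDerivAt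
  have hexp : -(r : ℤ) - 1 = -((r + 1 : ℕ) : ℤ) := by push_cast; ring
  simp only [hexp, zpow_neg, zpow_natCast, ← inv_pow] at h
  exact h.congr_fderiv (by push_cast; rw [neg_mul])

lemma fderiv_mul_inv_im_pow_apply {c : ℂ → ℂ} {z : ℂ} (hc : DifferentiableAt ℂ c z)
    (hz : z.im ≠ 0) (r : ℕ) (v : ℂ) :
    fderiv ℝ (fun w => c w * (w.im : ℂ)⁻¹ ^ r) z v =
      deriv c z * v * (z.im : ℂ)⁻¹ ^ r - r * c z * v.im * (z.im : ℂ)⁻¹ ^ (r + 1) := by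
  have h : HasFDerivAt (fun w => c w * (w.im : ℂ)⁻¹ ^ r) _ z :=
    (hc.hasDerivAt.hasFDerivAt.restrictScalars ℝ).mul (hasFDerivAt_inv_im_pow hz r)
  rw [h.fderiv]
  simp only [add_apply, smul_apply, ContinuousLinearMap.comp_apply, imCLM_apply,
    ofRealCLM_apply, smul_eq_mul, ContinuousLinearMap.coe_restrictScalars',
    ContinuousLinearMap.toSpanSingleton_apply]
  ring

section Expansion

variable {p : ℕ} {c : ℕ → ℂ → ℂ} {f : ℂ → ℂ} {z : ℂ}
  (hc : ∀ r, DifferentiableOn ℂ (c r) upperHalfPlaneSet)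
  (hf : Set.EqOn f (fun w => ∑ r ∈ range p, c r w * (w.im : ℂ)⁻¹ ^ r) upperHalfPlaneSet)
include hc hf

lemma fderiv_apply_eq_sum_of_eqOn (hz : 0 < z.im) (v : ℂ) :
    fderiv ℝ f z v = ∑ r ∈ range p,
      (deriv (c r) z * v * (z.im : ℂ)⁻¹ ^ r - r * c r z * v.im * (z.im : ℂ)⁻¹ ^ (r + 1)) := by
  have hdiff : ∀ r, DifferentiableAt ℂ (c r) z := fun r =>
    (hc r).differentiableAt (isOpen_upperHalfPlaneSet.mem_nhds hz)
  rw [(hf.eventuallyEq_of_mem (isOpen_upperHalfPlaneSet.mem_nhds hz)).fderiv_eq,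
    fderiv_fun_sum (A := fun r w => c r w * (w.im : ℂ)⁻¹ ^ r) fun r _ =>
      ((hdiff r).restrictScalars ℝ).mul (hasFDerivAt_inv_im_pow hz.ne' r).differentiableAt,
    _root_.sum_apply]
  exact sum_congr rfl fun r _ => fderiv_mul_inv_im_pow_apply (hdiff r) hz.ne' r v

lemma dtau_eq_sum_of_eqOn (hz : 0 < z.im) :
    dtau f z = ∑ r ∈ range p,
      (deriv (c r) z * (z.im : ℂ)⁻¹ ^ r + I * r / 2 * c r z * (z.im : ℂ)⁻¹ ^ (r + 1)) := by
  rw [dtau, fderiv_apply_eq_sum_of_eqOn hc hf hz, fderiv_apply_eq_sum_of_eqOn hc hf hz, mul_sum,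
    ← sum_sub_distrib, mul_sum]
  refine sum_congr rfl fun r _ => ?_
  simp only [one_im, I_im, ofReal_zero, ofReal_one]
  linear_combination (-deriv (c r) z * (z.im : ℂ)⁻¹ ^ r / 2) * I_sq

lemma dtaubar_eq_sum_of_eqOn (hz : 0 < z.im) :
    dtaubar f z = ∑ r ∈ range p, (-(I * r / 2) * c r z * (z.im : ℂ)⁻¹ ^ (r + 1)) := by
  rw [dtaubar, fderiv_apply_eq_sum_of_eqOn hc hf hz, fderiv_apply_eq_sum_of_eqOn hc hf hz, mul_sum,
    ← sum_add_distrib, mul_sum]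
  refine sum_congr rfl fun r _ => ?_
  simp only [one_im, I_im, ofReal_zero, ofReal_one]
  linear_combination (deriv (c r) z * (z.im : ℂ)⁻¹ ^ r / 2) * I_sq

end Expansion

def IsNearlyHolomorphic (p : ℕ) (f : ℂ → ℂ) : Prop :=
  ∃ c : ℕ → ℂ → ℂ, (∀ r, DifferentiableOn ℂ (c r) upperHalfPlaneSet) ∧
    Set.EqOn f (fun z => ∑ r ∈ range p, c r z * (z.im : ℂ)⁻¹ ^ r) upperHalfPlaneSet

variable {p q : ℕ} {f g : ℂ → ℂ}

lemma IsNearlyHolomorphic.congr (hf : IsNearlyHolomorphic p f)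
    (hfg : Set.EqOn f g upperHalfPlaneSet) : IsNearlyHolomorphic p g := by
  obtain ⟨c, hc, hfc⟩ := hf
  exact ⟨c, hc, hfg.symm.trans hfc⟩

lemma isNearlyHolomorphic_zero : IsNearlyHolomorphic p 0 :=
  ⟨0, fun _ => differentiableOn_const 0, fun z _ => by simp⟩

lemma IsNearlyHolomorphic.add (hf : IsNearlyHolomorphic p f) (hg : IsNearlyHolomorphic p g) :
    IsNearlyHolomorphic p (f + g) := by
  obtain ⟨c, hc, hfc⟩ := hf
  obtain ⟨b, hb, hgb⟩ := hg
  exact ⟨c + b, fun r => (hc r).add (hb r), fun z hz => by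
    simp [hfc hz, hgb hz, add_mul, sum_add_distrib]⟩

lemma isNearlyHolomorphic_sum {ι : Type*} (s : Finset ι) {F : ι → ℂ → ℂ}
    (hF : ∀ i ∈ s, IsNearlyHolomorphic p (F i)) :
    IsNearlyHolomorphic p (fun z => ∑ i ∈ s, F i z) := by
  classical
  induction s using Finset.induction_on with
  | empty =>
    simp only [sum_empty]
    exact isNearlyHolomorphic_zero
  | insert i s hi ih =>
    simp_rw [sum_insert hi]
    exact (hF i (mem_insert_self i s)).add (ih fun j hj => hF j (mem_insert_of_mem hj))

lemma isNearlyHolomorphic_mul_inv_im_pow {c : ℂ → ℂ}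
    (hc : DifferentiableOn ℂ c upperHalfPlaneSet) {r : ℕ} (hr : r < p) :
    IsNearlyHolomorphic p (fun z => c z * (z.im : ℂ)⁻¹ ^ r) := by
  refine ⟨fun s z => if s = r then c z else 0, fun s => ?_, fun z _ => ?_⟩
  · by_cases h : s = r <;> simp [h, hc]
  · simp [ite_mul, hr]

lemma IsNearlyHolomorphic.mono (hf : IsNearlyHolomorphic p f) (hpq : p ≤ q) :
    IsNearlyHolomorphic q f := by
  obtain ⟨c, hc, hfc⟩ := hf
  refine (isNearlyHolomorphic_sum _ fun r hr => ?_).congr hfc.symm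
  exact isNearlyHolomorphic_mul_inv_im_pow (hc r) ((mem_range.mp hr).trans_le hpq)

lemma isNearlyHolomorphic_one_of_differentiableOn
    (hf : DifferentiableOn ℂ f upperHalfPlaneSet) : IsNearlyHolomorphic 1 f :=
  (isNearlyHolomorphic_mul_inv_im_pow hf one_pos).congr fun z _ => by simp

lemma IsNearlyHolomorphic.raise (hf : IsNearlyHolomorphic p f) (k : ℤ) :
    IsNearlyHolomorphic (p + 1) (raise k f) := by
  obtain ⟨c, hc, hfc⟩ := hf
  have hderiv : ∀ r, DifferentiableOn ℂ (deriv (c r)) upperHalfPlaneSet := fun r =>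
    (hc r).deriv isOpen_upperHalfPlaneSet
  have hterm : ∀ r ∈ range p, IsNearlyHolomorphic (p + 1) fun z =>
      2 * I * deriv (c r) z * (z.im : ℂ)⁻¹ ^ r + (k - r) * c r z * (z.im : ℂ)⁻¹ ^ (r + 1) :=
    fun r hr => (isNearlyHolomorphic_mul_inv_im_pow ((hderiv r).const_mul (2 * I))
      (Nat.lt_succ_of_lt (mem_range.mp hr))).add
      (isNearlyHolomorphic_mul_inv_im_pow ((hc r).const_mul ((k : ℂ) - r)) (by simpa using hr))
  refine (isNearlyHolomorphic_sum (range p) hterm).congr fun z hz => ?_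
  simp only [_root_.raise, dtau_eq_sum_of_eqOn hc hfc hz, hfc hz, mul_sum, sum_div,
    ← sum_add_distrib]
  refine sum_congr rfl fun r _ => ?_
  linear_combination (-(r * c r z * (z.im : ℂ)⁻¹ ^ (r + 1))) * I_sq

lemma IsNearlyHolomorphic.lower (hf : IsNearlyHolomorphic (p + 1) f) :
    IsNearlyHolomorphic p (lower f) := by
  obtain ⟨c, hc, hfc⟩ := hf
  refine (isNearlyHolomorphic_sum (range p) fun r hr =>
    isNearlyHolomorphic_mul_inv_im_pow ((hc (r + 1)).const_mul (-((r : ℂ) + 1)))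
      (mem_range.mp hr)).congr fun z hz => ?_
  have hY : (z.im : ℂ) ≠ 0 := ofReal_ne_zero.mpr hz.ne'
  beta_reduce
  rw [_root_.lower, dtaubar_eq_sum_of_eqOn hc hfc hz, sum_range_succ']
  simp only [CharP.cast_eq_zero, mul_zero, zero_div, neg_zero, zero_mul, add_zero]
  rw [mul_sum]
  refine sum_congr rfl fun r _ => ?_
  have hpow : (z.im : ℂ) ^ 2 * (z.im : ℂ)⁻¹ ^ (r + 1 + 1) = (z.im : ℂ)⁻¹ ^ r := by
    rw [add_assoc, pow_add, mul_left_comm, ← mul_pow, mul_inv_cancel₀ hY, one_pow, mul_one]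
  push_cast
  linear_combination (-(r + 1) * c (r + 1) z * (z.im : ℂ)⁻¹ ^ r) * I_sq
    + (-(r + 1) * c (r + 1) z * I ^ 2) * hpow

lemma IsNearlyHolomorphic.mul (hf : IsNearlyHolomorphic (p + 1) f)
    (hg : IsNearlyHolomorphic (q + 1) g) :
    IsNearlyHolomorphic (p + q + 1) (fun z => f z * g z) := by
  obtain ⟨c, hc, hfc⟩ := hf
  obtain ⟨b, hb, hgb⟩ := hg
  refine (isNearlyHolomorphic_sum (range (p + 1)) fun r hr =>
    isNearlyHolomorphic_sum (range (q + 1)) fun s hs =>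
      isNearlyHolomorphic_mul_inv_im_pow (r := r + s) ((hc r).mul (hb s))
        (by simp only [mem_range] at hr hs; omega)).congr fun z hz => ?_
  simp only [hfc hz, hgb hz, sum_mul_sum, Pi.mul_apply, pow_add]
  exact sum_congr rfl fun r _ => sum_congr rfl fun s _ => by ring

lemma IsNearlyHolomorphic.iterate_lower {m : ℕ} (hf : IsNearlyHolomorphic (p + m) f) :
    IsNearlyHolomorphic p (_root_.lower^[m] f) := by
  induction m generalizing p with
  | zero => exact hf
  | succ m ih =>
    rw [Function.iterate_succ_apply']
    exact (ih (p := p + 1) (by rwa [add_right_comm, add_assoc])).lower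

lemma IsNearlyHolomorphic.eqOn_zero (hf : IsNearlyHolomorphic 0 f) :
    Set.EqOn f 0 upperHalfPlaneSet := by
  obtain ⟨c, -, hfc⟩ := hf
  exact fun z hz => by simpa using hfc hz

lemma isNearlyHolomorphic_raiseIter (l : ℤ) (hg : DifferentiableOn ℂ g upperHalfPlaneSet)
    (t : ℕ) : IsNearlyHolomorphic (t + 1) (raiseIter l t g) := by
  induction t with
  | zero => exact isNearlyHolomorphic_one_of_differentiableOn hg
  | succ t ih => exact ih.raise _

theorem cusp_form_orthogonal_to_product_of_raisings_general
    (l₁ l₂ k : ℤ) (hklt : k < l₁ + l₂)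
    (t₁ t₂ d : ℕ) (hd : 2 * (d : ℤ) = l₁ + 2 * t₁ + l₂ + 2 * t₂ - k)
    -- `g₁` is a modular form of weight `l₁` for `SL₂(ℤ)`:
    (g₁ : ℂ → ℂ) (hg₁hol : DifferentiableOn ℂ g₁ {z : ℂ | 0 < z.im})
    -- `g₂` is a modular form of weight `l₂` for `SL₂(ℤ)`:
    (g₂ : ℂ → ℂ) (hg₂hol : DifferentiableOn ℂ g₂ {z : ℂ | 0 < z.im})
    -- `f` is a cusp form of weight `k` for `SL₂(ℤ)`:
    (f : ℂ → ℂ) :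
    ∫ τ in fundamentalDomain,
        f τ *
          (starRingEnd ℂ)
            ((lower^[d] (fun w => raiseIter l₁ t₁ g₁ w * raiseIter l₂ t₂ g₂ w)) τ) *
          (τ.im : ℂ) ^ (k - 2) = 0 := by
  have hdepth : IsNearlyHolomorphic (0 + d)
      (fun w => raiseIter l₁ t₁ g₁ w * raiseIter l₂ t₂ g₂ w) :=
    ((isNearlyHolomorphic_raiseIter l₁ hg₁hol t₁).mul
      (isNearlyHolomorphic_raiseIter l₂ hg₂hol t₂)).mono (by omega)
  have hvanish := hdepth.iterate_lower.eqOn_zero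
  refine MeasureTheory.setIntegral_eq_zero_of_forall_eq_zero fun τ hτ => ?_
  simp [hvanish hτ.1]

/-- let `l₁, l₂ ≥ 4` and `k` be positive even integers with
`k < l₁ + l₂`; let `g₁, g₂` be holomorphic modular forms of level `SL₂(ℤ)` and
weights `l₁, l₂`; let `t₁, t₂ ∈ ℕ`, and let `d` be the nonnegative integer with
`2d = (l₁ + 2t₁ + l₂ + 2t₂) − k` (so `d > t₁ + t₂`).  Then every cusp form `f`
of weight `k` for `SL₂(ℤ)` is orthogonal under the Petersson pairing to the
weight-`k` holomorphic part `L^d (R_{l₁}^(t₁) g₁ · R_{l₂}^(t₂) g₂)`: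
`∫_𝒟 f(τ) · conj(L^d(R_{l₁}^(t₁) g₁ · R_{l₂}^(t₂) g₂)(τ)) · (Im τ)^(k−2) dx dy = 0`. -/
theorem cusp_form_orthogonal_to_product_of_raisings
    (l₁ l₂ k : ℤ) (hl₁ : 4 ≤ l₁) (hl₂ : 4 ≤ l₂) (hk : 0 < k)
    (hl₁e : Even l₁) (hl₂e : Even l₂) (hke : Even k) (hklt : k < l₁ + l₂)
    (t₁ t₂ d : ℕ) (hd : 2 * (d : ℤ) = l₁ + 2 * t₁ + l₂ + 2 * t₂ - k)
    -- `g₁` is a modular form of weight `l₁` for `SL₂(ℤ)`: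
    (g₁ : ℂ → ℂ) (hg₁hol : DifferentiableOn ℂ g₁ {z : ℂ | 0 < z.im})
    (hg₁inv : ∀ γ : Matrix (Fin 2) (Fin 2) ℤ, γ.det = 1 →
      ∀ z : ℂ, 0 < z.im → slash l₁ (γ.map (Int.cast : ℤ → ℝ)) g₁ z = g₁ z)
    (hg₁bd : ∃ C A : ℝ, ∀ z : ℂ, A ≤ z.im → ‖g₁ z‖ ≤ C)
    -- `g₂` is a modular form of weight `l₂` for `SL₂(ℤ)`:
    (g₂ : ℂ → ℂ) (hg₂hol : DifferentiableOn ℂ g₂ {z : ℂ | 0 < z.im})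
    (hg₂inv : ∀ γ : Matrix (Fin 2) (Fin 2) ℤ, γ.det = 1 →
      ∀ z : ℂ, 0 < z.im → slash l₂ (γ.map (Int.cast : ℤ → ℝ)) g₂ z = g₂ z)
    (hg₂bd : ∃ C A : ℝ, ∀ z : ℂ, A ≤ z.im → ‖g₂ z‖ ≤ C)
    -- `f` is a cusp form of weight `k` for `SL₂(ℤ)`:
    (f : ℂ → ℂ) (hfhol : DifferentiableOn ℂ f {z : ℂ | 0 < z.im})
    (hfinv : ∀ γ : Matrix (Fin 2) (Fin 2) ℤ, γ.det = 1 →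
      ∀ z : ℂ, 0 < z.im → slash k (γ.map (Int.cast : ℤ → ℝ)) f z = f z)
    (hfcusp : ∀ ε : ℝ, 0 < ε → ∃ A : ℝ, ∀ z : ℂ, A ≤ z.im → ‖f z‖ ≤ ε) :
    ∫ τ in fundamentalDomain,
        f τ *
          (starRingEnd ℂ)
            ((lower^[d] (fun w => raiseIter l₁ t₁ g₁ w * raiseIter l₂ t₂ g₂ w)) τ) *
          (τ.im : ℂ) ^ (k - 2) = 0 :=
  cusp_form_orthogonal_to_product_of_raisings_general l₁ l₂ k hklt t₁ t₂ d hd g₁ hg₁hol g₂ hg₂hol f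
end

section
/- Let g1, g2 : ℍ → ℂ be holomorphic functions, let k1, k2 ∈ ℤ, let t1, t2 be nonnegative integers, and let d be a nonnegative integer with d > t1 + t2. Then the d-fold iterate of the lowering operator annihilates the product of iterated raisings: L^d ( R_{k1}^{(t1)} g1 · R_{k2}^{(t2)} g2 ) = 0. (In other words, the almost holomorphic function R_{k1}^{(t1)} g1 · R_{k2}^{(t2)} g2 has depth at most t1 + t2.) -/
/-!
Call `f` almost holomorphic of depth `≤ t` if on `ℍ` it equals `∑ cᵢ(τ) (Im τ)^(-eᵢ)` with
holomorphic `cᵢ` and `eᵢ ≤ t`. Since `∂/∂τ̄` kills the `cᵢ` and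
`∂/∂τ̄ (Im τ)^(-e) = -(i e / 2) (Im τ)^(-e-1)`, the lowering operator sends depth `t` to depth
`t - 1` and annihilates depth `0`, while `R_k` raises the depth by one and products add depths.
So the product has depth `≤ t₁ + t₂` and more than `t₁ + t₂` lowerings annihilate it.
-/

open Complex Finset Set
open UpperHalfPlane (upperHalfPlaneSet isOpen_upperHalfPlaneSet)
open scoped Topology

local notation "ℍₒ" => upperHalfPlaneSet

lemma hasDerivAt_inv_pow (e : ℕ) {y : ℂ} (hy : y ≠ 0) :
    HasDerivAt (fun y : ℂ => y⁻¹ ^ e) (-e * y⁻¹ ^ (e + 1)) y := by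
  refine ((hasDerivAt_inv hy).fun_pow e).congr_deriv ?_
  rcases e with _ | e
  · simp
  · simp only [Nat.add_sub_cancel, inv_pow]
    field_simp
    ring

lemma hasFDerivAt_im_inv_pow (e : ℕ) {z : ℂ} (hz : z.im ≠ 0) :
    HasFDerivAt (fun w : ℂ => (w.im : ℂ)⁻¹ ^ e)
      (imCLM.smulRight (-e * (z.im : ℂ)⁻¹ ^ (e + 1))) z := by
  have h := (hasDerivAt_inv_pow e (ofReal_ne_zero.mpr hz)).comp_ofReal
  refine (h.hasFDerivAt.comp z imCLM.hasFDerivAt).congr_fderiv ?_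
  ext
  simp

section sumImInvPow

variable {ι : Type*} (s : Finset ι) (c : ι → ℂ → ℂ) (e : ι → ℕ)

noncomputable def sumImInvPow (z : ℂ) : ℂ := ∑ i ∈ s, c i z * (z.im : ℂ)⁻¹ ^ e i

variable {s c e} {z : ℂ}

lemma hasFDerivAt_sumImInvPow (hc : ∀ i ∈ s, DifferentiableAt ℂ (c i) z) (hz : z.im ≠ 0) :
    HasFDerivAt (sumImInvPow s c e)
      (∑ i ∈ s, (c i z • imCLM.smulRight (-e i * (z.im : ℂ)⁻¹ ^ (e i + 1)) +
        (z.im : ℂ)⁻¹ ^ e i • ((1 : ℂ →L[ℂ] ℂ).smulRight (deriv (c i) z)).restrictScalars ℝ)) z :=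
  HasFDerivAt.fun_sum fun i hi =>
    ((hc i hi).hasDerivAt.hasFDerivAt.restrictScalars ℝ).mul (hasFDerivAt_im_inv_pow (e i) hz)

lemma fderiv_sumImInvPow_one (hc : ∀ i ∈ s, DifferentiableAt ℂ (c i) z) (hz : z.im ≠ 0) :
    fderiv ℝ (sumImInvPow s c e) z 1 = ∑ i ∈ s, deriv (c i) z * (z.im : ℂ)⁻¹ ^ e i := by
  simp [(hasFDerivAt_sumImInvPow hc hz).fderiv, mul_comm]

lemma fderiv_sumImInvPow_I (hc : ∀ i ∈ s, DifferentiableAt ℂ (c i) z) (hz : z.im ≠ 0) :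
    fderiv ℝ (sumImInvPow s c e) z I = ∑ i ∈ s,
      (I * deriv (c i) z * (z.im : ℂ)⁻¹ ^ e i - e i * c i z * (z.im : ℂ)⁻¹ ^ (e i + 1)) := by
  rw [(hasFDerivAt_sumImInvPow hc hz).fderiv, _root_.sum_apply]
  refine sum_congr rfl fun i _ => ?_
  simp only [inv_pow, neg_mul, add_apply, smul_apply, ContinuousLinearMap.smulRight_apply,
    imCLM_apply, I_im, smul_neg, one_smul, smul_eq_mul, mul_neg,
    ContinuousLinearMap.coe_restrictScalars', one_apply_eq_self]
  ring

lemma dtau_sumImInvPow (hc : ∀ i ∈ s, DifferentiableAt ℂ (c i) z) (hz : z.im ≠ 0) :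
    dtau (sumImInvPow s c e) z = ∑ i ∈ s,
      (deriv (c i) z * (z.im : ℂ)⁻¹ ^ e i + I / 2 * e i * c i z * (z.im : ℂ)⁻¹ ^ (e i + 1)) := by
  rw [dtau, fderiv_sumImInvPow_one hc hz, fderiv_sumImInvPow_I hc hz, mul_sum, ← sum_sub_distrib,
    mul_sum]
  refine sum_congr rfl fun i _ => ?_
  linear_combination (-(1 / 2) * deriv (c i) z * (z.im : ℂ)⁻¹ ^ e i) * I_mul_I

lemma dtaubar_sumImInvPow (hc : ∀ i ∈ s, DifferentiableAt ℂ (c i) z) (hz : z.im ≠ 0) :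
    dtaubar (sumImInvPow s c e) z = ∑ i ∈ s, -I / 2 * e i * c i z * (z.im : ℂ)⁻¹ ^ (e i + 1) := by
  rw [dtaubar, fderiv_sumImInvPow_one hc hz, fderiv_sumImInvPow_I hc hz, mul_sum, ← sum_add_distrib,
    mul_sum]
  refine sum_congr rfl fun i _ => ?_
  linear_combination (1 / 2 * deriv (c i) z * (z.im : ℂ)⁻¹ ^ e i) * I_mul_I

lemma raise_sumImInvPow (k : ℤ) (hc : ∀ i ∈ s, DifferentiableAt ℂ (c i) z) (hz : z.im ≠ 0) :
    raise k (sumImInvPow s c e) z = ∑ i ∈ s,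
      (2 * I * deriv (c i) z * (z.im : ℂ)⁻¹ ^ e i +
        (k - e i) * c i z * (z.im : ℂ)⁻¹ ^ (e i + 1)) := by
  rw [raise, dtau_sumImInvPow hc hz, sumImInvPow, mul_sum, mul_sum, sum_div, ← sum_add_distrib]
  refine sum_congr rfl fun i _ => ?_
  linear_combination (e i * c i z * (z.im : ℂ)⁻¹ ^ (e i + 1)) * I_mul_I

lemma lower_sumImInvPow (hc : ∀ i ∈ s, DifferentiableAt ℂ (c i) z) (hz : z.im ≠ 0) :
    lower (sumImInvPow s c e) z = sumImInvPow s (fun i w => -e i * c i w) (fun i => e i - 1) z := by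
  rw [lower, dtaubar_sumImInvPow hc hz, sumImInvPow, mul_sum]
  refine sum_congr rfl fun i _ => ?_
  -- `e i - 1` truncates at `e i = 0`, where the coefficient `-e i` vanishes anyway.
  rcases e i with _ | n
  · simp
  · have hy : (z.im : ℂ) ≠ 0 := ofReal_ne_zero.mpr hz
    simp only [Nat.add_sub_cancel, inv_pow]
    field_simp
    linear_combination (z.im : ℂ) ^ 2 * c i z * (z.im : ℂ) ^ n * I_sq

end sumImInvPow

lemma Filter.EventuallyEq.raise_eq {f g : ℂ → ℂ} {z : ℂ} (h : f =ᶠ[𝓝 z] g) (k : ℤ) :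
    raise k f z = raise k g z := by
  simp only [raise, dtau, h.fderiv_eq, h.eq_of_nhds]

lemma Filter.EventuallyEq.lower_eq {f g : ℂ → ℂ} {z : ℂ} (h : f =ᶠ[𝓝 z] g) :
    lower f z = lower g z := by
  simp only [lower, dtaubar, h.fderiv_eq]

section upperHalfPlane

variable {ι : Type*} {s : Finset ι} {c : ι → ℂ → ℂ} {e : ι → ℕ} {f : ℂ → ℂ} {z : ℂ}

lemma raise_eq_of_eqOn_sumImInvPow (k : ℤ) (hc : ∀ i, DifferentiableOn ℂ (c i) ℍₒ)
    (hf : EqOn f (sumImInvPow s c e) ℍₒ) (hz : z ∈ ℍₒ) :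
    raise k f z = ∑ i ∈ s,
      (2 * I * deriv (c i) z * (z.im : ℂ)⁻¹ ^ e i +
        (k - e i) * c i z * (z.im : ℂ)⁻¹ ^ (e i + 1)) := by
  have hnhds := isOpen_upperHalfPlaneSet.mem_nhds hz
  rw [(hf.eventuallyEq_of_mem hnhds).raise_eq,
    raise_sumImInvPow k (fun i _ => (hc i).differentiableAt hnhds) hz.ne']

lemma lower_eq_of_eqOn_sumImInvPow (hc : ∀ i, DifferentiableOn ℂ (c i) ℍₒ)
    (hf : EqOn f (sumImInvPow s c e) ℍₒ) (hz : z ∈ ℍₒ) :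
    lower f z = sumImInvPow s (fun i w => -e i * c i w) (fun i => e i - 1) z := by
  have hnhds := isOpen_upperHalfPlaneSet.mem_nhds hz
  rw [(hf.eventuallyEq_of_mem hnhds).lower_eq,
    lower_sumImInvPow (fun i _ => (hc i).differentiableAt hnhds) hz.ne']

end upperHalfPlane

-- A polynomial of degree `≤ t` in `1 / Im τ` with holomorphic coefficients: depth `≤ t`.
def IsAlmostHolomorphic (t : ℕ) (f : ℂ → ℂ) : Prop :=
  ∃ (ι : Type) (s : Finset ι) (c : ι → ℂ → ℂ) (e : ι → ℕ),
    (∀ i, DifferentiableOn ℂ (c i) ℍₒ) ∧ (∀ i, e i ≤ t) ∧ EqOn f (sumImInvPow s c e) ℍₒ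

namespace IsAlmostHolomorphic

variable {t : ℕ} {f g : ℂ → ℂ}

lemma of_differentiableOn (hg : DifferentiableOn ℂ g ℍₒ) : IsAlmostHolomorphic 0 g :=
  ⟨Unit, {()}, fun _ => g, fun _ => 0, fun _ => hg, fun _ => le_rfl,
    fun z _ => by simp [sumImInvPow]⟩

lemma mono {t' : ℕ} (hf : IsAlmostHolomorphic t f) (h : t ≤ t') : IsAlmostHolomorphic t' f :=
  let ⟨ι, s, c, e, hc, he, hf⟩ := hf
  ⟨ι, s, c, e, hc, fun i => (he i).trans h, hf⟩

lemma mul {t' : ℕ} (hf : IsAlmostHolomorphic t f) (hg : IsAlmostHolomorphic t' g) :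
    IsAlmostHolomorphic (t + t') (f * g) := by
  obtain ⟨ι, s, c, e, hc, he, hf⟩ := hf
  obtain ⟨κ, s', c', e', hc', he', hg⟩ := hg
  refine ⟨ι × κ, s ×ˢ s', fun p z => c p.1 z * c' p.2 z, fun p => e p.1 + e' p.2,
    fun p => (hc p.1).mul (hc' p.2), fun p => add_le_add (he p.1) (he' p.2), fun z hz => ?_⟩
  rw [Pi.mul_apply, hf hz, hg hz, sumImInvPow, sumImInvPow, sum_mul_sum, sumImInvPow,
    sum_product]
  refine sum_congr rfl fun i _ => sum_congr rfl fun j _ => ?_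
  ring

lemma raise (hf : IsAlmostHolomorphic t f) (k : ℤ) : IsAlmostHolomorphic (t + 1) (raise k f) := by
  obtain ⟨ι, s, c, e, hc, he, hf⟩ := hf
  refine ⟨ι ⊕ ι, s.disjSum s,
    Sum.elim (fun i z => 2 * I * deriv (c i) z) (fun i z => (k - e i) * c i z),
    Sum.elim e (fun i => e i + 1), ?_, ?_, fun z hz => ?_⟩
  · rintro (i | i)
    · exact ((hc i).deriv isOpen_upperHalfPlaneSet).const_mul _
    · exact (hc i).const_mul _
  · rintro (i | i)
    · exact (he i).trans t.le_succ
    · exact Nat.succ_le_succ (he i)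
  · rw [raise_eq_of_eqOn_sumImInvPow k hc hf hz, sumImInvPow, sum_disjSum, ← sum_add_distrib]
    rfl

lemma lower (hf : IsAlmostHolomorphic t f) : IsAlmostHolomorphic (t - 1) (lower f) := by
  obtain ⟨ι, s, c, e, hc, he, hf⟩ := hf
  refine ⟨ι, s, fun i w => -e i * c i w, fun i => e i - 1, fun i => (hc i).const_mul _,
    fun i => Nat.sub_le_sub_right (he i) 1, fun z hz => lower_eq_of_eqOn_sumImInvPow hc hf hz⟩

lemma iterate_lower (hf : IsAlmostHolomorphic t f) (n : ℕ) :
    IsAlmostHolomorphic (t - n) (_root_.lower^[n] f) := by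
  induction n with
  | zero => exact hf
  | succ n ih =>
    rw [Function.iterate_succ_apply', Nat.sub_succ]
    exact ih.lower

lemma lower_eqOn_zero (hf : IsAlmostHolomorphic 0 f) : EqOn (_root_.lower f) 0 ℍₒ := by
  obtain ⟨ι, s, c, e, hc, he, hf⟩ := hf
  intro z hz
  rw [lower_eq_of_eqOn_sumImInvPow hc hf hz, Pi.zero_apply, sumImInvPow]
  exact sum_eq_zero fun i _ => by simp [Nat.le_zero.mp (he i)]

lemma iterate_lower_eqOn_zero {d : ℕ} (hf : IsAlmostHolomorphic t f) (hd : t < d) :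
    EqOn (_root_.lower^[d] f) 0 ℍₒ := by
  obtain ⟨n, rfl⟩ : ∃ n, d = n + 1 := ⟨d - 1, by omega⟩
  rw [Function.iterate_succ_apply']
  exact ((hf.iterate_lower n).mono (by omega)).lower_eqOn_zero

end IsAlmostHolomorphic

lemma isAlmostHolomorphic_raiseIter {g : ℂ → ℂ} (hg : DifferentiableOn ℂ g ℍₒ) (k : ℤ) (t : ℕ) :
    IsAlmostHolomorphic t (raiseIter k t g) := by
  induction t with
  | zero => exact .of_differentiableOn hg
  | succ t ih => exact ih.raise _

/-- for holomorphic `g₁, g₂ : ℍ → ℂ`, weights `k₁, k₂ ∈ ℤ`,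
`t₁, t₂ ∈ ℕ` and `d > t₁ + t₂`, the `d`-fold iterate of the lowering operator
annihilates `R_{k₁}^(t₁) g₁ · R_{k₂}^(t₂) g₂`; i.e., this almost holomorphic
function has depth at most `t₁ + t₂`. -/
theorem lower_iter_annihilates_product (g₁ g₂ : ℂ → ℂ)
    (hg₁ : DifferentiableOn ℂ g₁ {z : ℂ | 0 < z.im})
    (hg₂ : DifferentiableOn ℂ g₂ {z : ℂ | 0 < z.im})
    (k₁ k₂ : ℤ) (t₁ t₂ d : ℕ) (hd : t₁ + t₂ < d) :
    ∀ z : ℂ, 0 < z.im →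
      (lower^[d] (fun w => raiseIter k₁ t₁ g₁ w * raiseIter k₂ t₂ g₂ w)) z = 0 :=
  fun _ hz => ((isAlmostHolomorphic_raiseIter hg₁ k₁ t₁).mul
    (isAlmostHolomorphic_raiseIter hg₂ k₂ t₂)).iterate_lower_eqOn_zero hd hz
end

section
/- Let G be a group, Γ a subgroup of G, and Δ a subset of G such that for all m ∈ Δ and γ ∈ Γ there exists a unique element m⋆γ ∈ Δ with mγ ∈ Γ·(m⋆γ); define I_m(γ) := (mγ)(m⋆γ)^{−1} ∈ Γ. Let ρ be a representation of Γ on a complex vector space V. Then the assignment (T_Δ ρ)(γ)(v ⊗ e_m) := ρ( I_m(γ^{−1})^{−1} ) v ⊗ e_{m⋆γ^{−1}}, extended linearly on V ⊗ ℂ[Δ], defines a representation of Γ on V ⊗ ℂ[Δ]; that is, each (T_Δρ)(γ) is an invertible linear map and (T_Δρ)(γ₁γ₂) = (T_Δρ)(γ₁) ∘ (T_Δρ)(γ₂). -/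
open TensorProduct

/-!
Abstract Hecke-transversal setting: `G` a group, `Γ ≤ G`, `Δ ⊆ G`, and for each
`m ∈ Δ`, `γ ∈ Γ` a unique `m⋆γ ∈ Δ` with `m·γ ∈ Γ·(m⋆γ)`; `I_m(γ) := (mγ)(m⋆γ)⁻¹ ∈ Γ`.
The data is encoded by functions `star : Δ → Γ → Δ` and `I : Δ → Γ → Γ` subject to
`hstar : ↑m * ↑γ = ↑(I m γ) * ↑(star m γ)` together with the uniqueness hypothesis
`huniq`.
-/

/-- The vector-valued Hecke operator on representations: `(T_Δ ρ)(γ)` is the linear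
endomorphism of `V ⊗ ℂ[Δ]` sending `v ⊗ e_m` to `ρ(I_m(γ⁻¹)⁻¹) v ⊗ e_{m⋆γ⁻¹}`. -/
noncomputable def heckeRep {G : Type} [Group G] {Γ : Subgroup G} {Δ : Set G}
    {V : Type} [AddCommGroup V] [Module ℂ V] (ρ : Representation ℂ Γ V)
    (star : Δ → Γ → Δ) (I : Δ → Γ → Γ) (γ : Γ) :
    (V ⊗[ℂ] (Δ →₀ ℂ)) →ₗ[ℂ] (V ⊗[ℂ] (Δ →₀ ℂ)) :=
  letI : DecidableEq ↥Δ := Classical.decEq _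
  ((TensorProduct.finsuppScalarRight ℂ ℂ V ↥Δ).symm.toLinearMap).comp
    ((Finsupp.lsum ℂ fun m : ↥Δ =>
        (Finsupp.lsingle (star m γ⁻¹)).comp (ρ ((I m γ⁻¹)⁻¹))).comp
      (TensorProduct.finsuppScalarRight ℂ ℂ V ↥Δ).toLinearMap)

/-!
Uniqueness of `m ⋆ γ` makes `⋆` a right action of `Γ` on `Δ` and `I` a cocycle for it:
`I_m(γγ') = I_m(γ) I_{m⋆γ}(γ')`. Composing `(T_Δρ)(γ₁)` with `(T_Δρ)(γ₂)` on `v ⊗ e_m`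
therefore produces `ρ(I_m(γ₂⁻¹γ₁⁻¹)⁻¹) v ⊗ e_{m⋆(γ₂⁻¹γ₁⁻¹)}`, which is `(T_Δρ)(γ₁γ₂)`;
so `T_Δρ` is a monoid homomorphism out of a group, and its values are invertible.
-/

theorem TensorProduct.ext_tmul_single {R V M ι : Type*} [CommSemiring R] [AddCommMonoid V]
    [Module R V] [AddCommMonoid M] [Module R M] {f g : V ⊗[R] (ι →₀ R) →ₗ[R] M}
    (h : ∀ v i, f (v ⊗ₜ Finsupp.single i 1) = g (v ⊗ₜ Finsupp.single i 1)) : f = g := by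
  ext v i
  exact h v i

structure IsHeckeTransversal {G : Type} [Group G] {Γ : Subgroup G} {Δ : Set G}
    (star : Δ → Γ → Δ) (I : Δ → Γ → Γ) : Prop where
  mul_eq : ∀ (m : Δ) (γ : Γ), (m : G) * (γ : G) = (I m γ : G) * (star m γ : G)
  eq_star : ∀ (m : Δ) (γ : Γ) (m' : Δ),
    (∃ g : Γ, (m : G) * (γ : G) = (g : G) * (m' : G)) → m' = star m γ

namespace IsHeckeTransversal

variable {G : Type} [Group G] {Γ : Subgroup G} {Δ : Set G} {star : Δ → Γ → Δ} {I : Δ → Γ → Γ}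

theorem star_one (h : IsHeckeTransversal star I) (m : Δ) : star m 1 = m :=
  (h.eq_star m 1 m ⟨1, by simp⟩).symm

theorem I_one (h : IsHeckeTransversal star I) (m : Δ) : I m 1 = 1 := by
  have hm := h.mul_eq m 1
  rw [h.star_one, Subgroup.coe_one, mul_one, right_eq_mul] at hm
  exact Subtype.ext hm

theorem mul_mul_eq_I_mul_I_mul_star_star (h : IsHeckeTransversal star I) (m : Δ) (γ γ' : Γ) :
    (m : G) * ↑(γ * γ') = ↑(I m γ * I (star m γ) γ') * (star (star m γ) γ' : G) := by
  rw [Subgroup.coe_mul, Subgroup.coe_mul, ← mul_assoc, h.mul_eq m γ, mul_assoc,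
    h.mul_eq (star m γ) γ', mul_assoc]

theorem star_mul (h : IsHeckeTransversal star I) (m : Δ) (γ γ' : Γ) :
    star m (γ * γ') = star (star m γ) γ' :=
  (h.eq_star m (γ * γ') _ ⟨_, h.mul_mul_eq_I_mul_I_mul_star_star m γ γ'⟩).symm

theorem I_mul (h : IsHeckeTransversal star I) (m : Δ) (γ γ' : Γ) :
    I m (γ * γ') = I m γ * I (star m γ) γ' := by
  have hm := (h.mul_eq m (γ * γ')).symm.trans (h.mul_mul_eq_I_mul_I_mul_star_star m γ γ')
  rw [h.star_mul] at hm
  exact Subtype.ext (mul_right_cancel hm)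

end IsHeckeTransversal

section heckeRep

variable {G : Type} [Group G] {Γ : Subgroup G} {Δ : Set G} {star : Δ → Γ → Δ} {I : Δ → Γ → Γ}
  {V : Type} [AddCommGroup V] [Module ℂ V]

theorem heckeRep_tmul_single (ρ : Representation ℂ Γ V) (γ : Γ) (v : V) (m : Δ) :
    heckeRep ρ star I γ (v ⊗ₜ[ℂ] Finsupp.single m 1) =
      ρ ((I m γ⁻¹)⁻¹) v ⊗ₜ[ℂ] Finsupp.single (star m γ⁻¹) 1 := by
  simp [heckeRep, TensorProduct.finsuppScalarRight_apply_tmul,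
    TensorProduct.finsuppScalarRight_symm_apply_single]

theorem heckeRep_one (h : IsHeckeTransversal star I) (ρ : Representation ℂ Γ V) :
    heckeRep ρ star I 1 = 1 :=
  TensorProduct.ext_tmul_single fun v m => by
    rw [heckeRep_tmul_single, inv_one, h.star_one, h.I_one, inv_one, map_one,
      Module.End.one_apply, Module.End.one_apply]

theorem heckeRep_mul (h : IsHeckeTransversal star I) (ρ : Representation ℂ Γ V) (γ₁ γ₂ : Γ) :
    heckeRep ρ star I (γ₁ * γ₂) = heckeRep ρ star I γ₁ * heckeRep ρ star I γ₂ :=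
  TensorProduct.ext_tmul_single fun v m => by
    rw [Module.End.mul_apply, heckeRep_tmul_single, heckeRep_tmul_single, heckeRep_tmul_single,
      mul_inv_rev, h.star_mul, h.I_mul, mul_inv_rev, map_mul, Module.End.mul_apply]

noncomputable def heckeRepresentation (h : IsHeckeTransversal star I)
    (ρ : Representation ℂ Γ V) : Representation ℂ Γ (V ⊗[ℂ] (Δ →₀ ℂ)) where
  toFun := heckeRep ρ star I
  map_one' := heckeRep_one h ρ
  map_mul' := heckeRep_mul h ρ

end heckeRep

/-- the assignment `(T_Δρ)(γ)(v ⊗ e_m) = ρ(I_m(γ⁻¹)⁻¹) v ⊗ e_{m⋆γ⁻¹}`,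
extended linearly on `V ⊗ ℂ[Δ]`, defines a representation of `Γ`: each
`(T_Δρ)(γ)` is an invertible linear map and `(T_Δρ)(γ₁γ₂) = (T_Δρ)(γ₁) ∘ (T_Δρ)(γ₂)`. -/
theorem heckeRep_is_representation {G : Type} [Group G] (Γ : Subgroup G) (Δ : Set G)
    (star : Δ → Γ → Δ) (I : Δ → Γ → Γ)
    (hstar : ∀ (m : Δ) (γ : Γ), (m : G) * (γ : G) = (I m γ : G) * (star m γ : G))
    (huniq : ∀ (m : Δ) (γ : Γ) (m' : Δ),
      (∃ g : Γ, (m : G) * (γ : G) = (g : G) * (m' : G)) → m' = star m γ)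
    {V : Type} [AddCommGroup V] [Module ℂ V] (ρ : Representation ℂ Γ V) :
    (∀ (γ : Γ) (v : V) (m : Δ),
        heckeRep ρ star I γ (v ⊗ₜ[ℂ] Finsupp.single m 1) =
          ρ ((I m γ⁻¹)⁻¹) v ⊗ₜ[ℂ] Finsupp.single (star m γ⁻¹) 1) ∧
    (∀ γ : Γ, Function.Bijective (heckeRep ρ star I γ)) ∧
    (∀ γ₁ γ₂ : Γ,
        heckeRep ρ star I (γ₁ * γ₂) =
          (heckeRep ρ star I γ₁).comp (heckeRep ρ star I γ₂)) := by
  have h : IsHeckeTransversal star I := ⟨hstar, huniq⟩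
  refine ⟨heckeRep_tmul_single ρ, fun γ => ?_, heckeRep_mul h ρ⟩
  exact (Module.End.isUnit_iff _).mp ((Group.isUnit γ).map (heckeRepresentation h ρ))
end
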